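/- Let k ≥ 3, n ≥ 1, and let g be a graph automorphism of the Tower of Hanoi graph H_n^k that fixes the perfect state \overline{i} for some peg i. Then g maps the substructure [i] onto itself: for every vertex v with v(n−1) = i, the vertex g(v) also satisfies (g v)(n−1) = i. -/

import Mathlib

/-!
Perfect states are exactly the vertices whose neighbourhood is a clique (only the smallest disk
can move, to any other peg), so an automorphism permutes them. In a shortest walk from `v` to a
perfect state `\overline{j}` with `j ≠ v(n-1)`, reflecting the part after the first move of the
largest disk (swapping its source and target pegs) gives a strictly shorter walk to
`\overline{v(n-1)}`: every state is strictly closer to the perfect state on the peg of its largest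
disk than to any other perfect state. If `g` fixes `\overline{i}`, `v(n-1) = i` and
`(g v)(n-1) = q ≠ i`, let `g \overline{j} = \overline{q}`; then `j ≠ i` and
`d(v, ī) < d(v, j̄) = d(g v, q̄) < d(g v, ī) = d(v, ī)`.
-/

/-- The Tower of Hanoi graph `H_n^k`: vertices are functions `Fin n → Fin k`
(disk `i` lies on peg `v i`; smaller indices are smaller disks); two states are
adjacent iff they differ by one legal move of a single disk `d`: the position of
`d` changes, all other disks stay, and no smaller disk lies on the source peg or
the target peg of `d`. -/
def hanoiGraph (n k : ℕ) : SimpleGraph (Fin n → Fin k) where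
  Adj v w := ∃ d : Fin n, v d ≠ w d ∧ (∀ i : Fin n, i ≠ d → v i = w i) ∧
    (∀ i : Fin n, i < d → v i ≠ v d ∧ v i ≠ w d)
  symm := by
    constructor
    rintro v w ⟨d, h1, h2, h3⟩
    refine ⟨d, h1.symm, fun i hi => (h2 i hi).symm, fun i hi => ?_⟩
    have he : v i = w i := h2 i (ne_of_lt hi)
    have h := h3 i hi
    exact ⟨he ▸ h.2, he ▸ h.1⟩
  loopless := by constructor; rintro v ⟨d, h1, -⟩; exact h1 rfl

namespace SimpleGraph

variable {V W : Type*} {G : SimpleGraph V} {G' : SimpleGraph W} {u v : V}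

theorem Hom.edist_le (f : G →g G') : G'.edist (f u) (f v) ≤ G.edist u v := by
  by_cases hr : G.Reachable u v
  · obtain ⟨p, hp⟩ := hr.exists_walk_length_eq_edist
    calc G'.edist (f u) (f v) ≤ (p.map f).length := SimpleGraph.edist_le _
      _ = G.edist u v := by rw [Walk.length_map, hp]
  · simp [edist_eq_top_of_not_reachable hr]

theorem Iso.dist_eq (f : G ≃g G') : G'.dist (f u) (f v) = G.dist u v := by
  have h : G'.edist (f u) (f v) = G.edist u v :=
    le_antisymm f.toHom.edist_le (by simpa using f.symm.toHom.edist_le (u := f u) (v := f v))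
  rw [dist, dist, h]

theorem Iso.isClique_neighborSet (f : G ≃g G') (h : G.IsClique (G.neighborSet v)) :
    G'.IsClique (G'.neighborSet (f v)) := by
  intro a ha b hb hab
  have ha' : f.symm a ∈ G.neighborSet v := by simpa using f.symm.apply_mem_neighborSet_iff.2 ha
  have hb' : f.symm b ∈ G.neighborSet v := by simpa using f.symm.apply_mem_neighborSet_iff.2 hb
  exact f.symm.map_adj_iff.1 (h ha' hb' (f.symm.injective.ne hab))

end SimpleGraph

open SimpleGraph

theorem Fin.snoc_const_self {α : Type*} {n : ℕ} (c : α) :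
    Fin.snoc (fun _ : Fin n => c) c = fun _ => c := by
  funext i
  induction i using Fin.lastCases <;> simp

namespace hanoiGraph

variable {n k : ℕ}

theorem adj_update {v : Fin n → Fin k} {d : Fin n} {x : Fin k} (hx : v d ≠ x)
    (hfree : ∀ i < d, v i ≠ v d ∧ v i ≠ x) :
    (hanoiGraph n k).Adj v (Function.update v d x) :=
  ⟨d, by simpa using hx, fun i hi => (Function.update_of_ne hi _ _).symm, by simpa using hfree⟩

theorem move_spec_of_adj {v w : Fin n → Fin k} (h : (hanoiGraph n k).Adj v w) {d : Fin n}
    (hd : v d ≠ w d) : (∀ i ≠ d, v i = w i) ∧ ∀ i < d, v i ≠ v d ∧ v i ≠ w d := by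
  obtain ⟨d', -, hsame, hfree⟩ := h
  obtain rfl : d = d' := by_contra fun h' => hd (hsame d h')
  exact ⟨hsame, hfree⟩

theorem eq_of_adj_of_apply_ne {v w : Fin n → Fin k} (h : (hanoiGraph n k).Adj v w)
    {i j : Fin n} (hi : v i ≠ w i) (hj : v j ≠ w j) : i = j :=
  by_contra fun hij => hi ((move_spec_of_adj h hj).1 i hij)

def relabelPegs (σ : Equiv.Perm (Fin k)) : hanoiGraph n k →g hanoiGraph n k where
  toFun v := σ ∘ v
  map_rel' := by
    rintro v w ⟨d, hne, hsame, hfree⟩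
    exact ⟨d, σ.injective.ne hne, fun i hi => congrArg σ (hsame i hi),
      fun i hi => ⟨σ.injective.ne (hfree i hi).1, σ.injective.ne (hfree i hi).2⟩⟩

def addLargestDisk (x : Fin k) : hanoiGraph n k →g hanoiGraph (n + 1) k where
  toFun v := Fin.snoc v x
  map_rel' := by
    rintro v w ⟨d, hne, hsame, hfree⟩
    refine ⟨d.castSucc, by simpa using hne, fun i hi => ?_, fun i hi => ?_⟩
    · induction i using Fin.lastCases with
      | last => simp
      | cast i => simpa using hsame i (by rintro rfl; exact hi rfl)
    · obtain ⟨i, rfl⟩ := Fin.exists_castSucc_eq.2 (hi.trans_le (Fin.le_last _)).ne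
      simpa using hfree i (Fin.castSucc_lt_castSucc_iff.1 hi)

@[simp]
theorem addLargestDisk_apply (x : Fin k) (v : Fin n → Fin k) :
    addLargestDisk x v = Fin.snoc v x :=
  rfl

theorem reachable_const (hk : 3 ≤ k) (v : Fin n → Fin k) (c : Fin k) :
    (hanoiGraph n k).Reachable v fun _ => c := by
  induction n generalizing c with
  | zero => exact (Subsingleton.elim v _) ▸ Reachable.refl _
  | succ n ih =>
    set x := v (Fin.last n)
    obtain ⟨y, hyx, hyc⟩ := Fin.exists_ne_and_ne_of_two_lt x c hk
    have hmove : (hanoiGraph (n + 1) k).Reachable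
        (Fin.snoc (fun _ => y) x) (Fin.snoc (fun _ => y) c) := by
      by_cases hxc : x = c
      · rw [hxc]
      · have := adj_update (v := Fin.snoc (fun _ => y) x) (d := Fin.last n) (x := c)
          (by simpa using hxc) fun i hi => by
            obtain ⟨i, rfl⟩ := Fin.exists_castSucc_eq.2 hi.ne
            simpa using ⟨hyx, hyc⟩
        rw [Fin.update_snoc_last] at this
        exact this.reachable
    have hsmall : (hanoiGraph (n + 1) k).Reachable v (Fin.snoc (fun _ => y) x) := by
      simpa [x, Fin.snoc_init_self] using (ih (Fin.init v) y).map (addLargestDisk x)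
    have hrest : (hanoiGraph (n + 1) k).Reachable (Fin.snoc (fun _ => y) c) fun _ => c := by
      simpa [Fin.snoc_const_self] using (ih (fun _ => y) c).map (addLargestDisk c)
    exact hsmall.trans (hmove.trans hrest)

theorem apply_eq_of_adj_const {c : Fin k} {w : Fin (n + 1) → Fin k}
    (h : (hanoiGraph (n + 1) k).Adj (fun _ => c) w) {i : Fin (n + 1)} (hi : i ≠ 0) : w i = c := by
  obtain ⟨d, -, hsame, hfree⟩ := h
  obtain rfl : d = 0 := by_contra fun hd => (hfree 0 (Fin.pos_iff_ne_zero.2 hd)).1 rfl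
  exact (hsame i hi).symm

theorem isClique_neighborSet_const (c : Fin k) :
    (hanoiGraph (n + 1) k).IsClique ((hanoiGraph (n + 1) k).neighborSet fun _ => c) := by
  intro w₁ h₁ w₂ h₂ hne
  have hagree : ∀ i ≠ 0, w₁ i = w₂ i := fun i hi =>
    (apply_eq_of_adj_const h₁ hi).trans (apply_eq_of_adj_const h₂ hi).symm
  have h0 : w₁ 0 ≠ w₂ 0 := fun h0 =>
    hne (funext fun i => if hi : i = 0 then hi ▸ h0 else hagree i hi)
  exact ⟨0, h0, hagree, fun i hi => absurd hi (Fin.not_lt_zero i)⟩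

/-- From a non-perfect state, move either the smallest disk or the smallest disk `d` not on its
peg to the third peg: the two neighbours differ in two disks, so they are not adjacent. -/
theorem exists_eq_const_of_isClique_neighborSet (hk : 3 ≤ k) {v : Fin (n + 1) → Fin k}
    (h : (hanoiGraph (n + 1) k).IsClique ((hanoiGraph (n + 1) k).neighborSet v)) :
    ∃ c, v = fun _ => c := by
  by_contra! hv
  have hex : ∃ d, v d ≠ v 0 := by
    by_contra! hall
    exact hv (v 0) (funext hall)
  obtain ⟨d, hd, hmin⟩ := WellFounded.has_min wellFounded_lt {d | v d ≠ v 0} hex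
  have hbelow : ∀ i < d, v i = v 0 := fun i hi => by_contra fun h' => hmin i h' hi
  have hd0 : d ≠ 0 := by rintro rfl; exact hd rfl
  obtain ⟨x, hx0, hxd⟩ := Fin.exists_ne_and_ne_of_two_lt (v 0) (v d) hk
  have h₁ : (hanoiGraph (n + 1) k).Adj v (Function.update v 0 x) :=
    adj_update (Ne.symm hx0) fun i hi => absurd hi (Fin.not_lt_zero i)
  have h₂ : (hanoiGraph (n + 1) k).Adj v (Function.update v d x) :=
    adj_update (Ne.symm hxd) fun i hi => by
      rw [hbelow i hi]
      exact ⟨Ne.symm hd, Ne.symm hx0⟩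
  have hne0 : Function.update v 0 x 0 ≠ Function.update v d x 0 := by
    simpa [Function.update_of_ne hd0.symm] using hx0
  have hned : Function.update v 0 x d ≠ Function.update v d x d := by
    simpa [Function.update_of_ne hd0] using Ne.symm hxd
  exact hd0 (eq_of_adj_of_apply_ne (h h₁ h₂ fun he => hne0 (congrFun he 0)) hne0 hned).symm

theorem exists_iso_apply_const_eq_const (hk : 3 ≤ k)
    (g : hanoiGraph (n + 1) k ≃g hanoiGraph (n + 1) k) (c : Fin k) :
    ∃ c', g (fun _ => c) = fun _ => c' :=
  exists_eq_const_of_isClique_neighborSet hk (g.isClique_neighborSet (isClique_neighborSet_const c))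

theorem swap_comp_eq_of_adj {v w : Fin (n + 1) → Fin k} (h : (hanoiGraph (n + 1) k).Adj v w)
    (hlast : v (Fin.last n) ≠ w (Fin.last n)) :
    Equiv.swap (v (Fin.last n)) (w (Fin.last n)) ∘ w = v := by
  obtain ⟨hsame, hfree⟩ := move_spec_of_adj h hlast
  funext i
  induction i using Fin.lastCases with
  | last => simp
  | cast i =>
    have hi := hfree i.castSucc (Fin.castSucc_lt_last i)
    rw [Function.comp_apply, ← hsame _ (Fin.castSucc_lt_last i).ne,
      Equiv.swap_apply_of_ne_of_ne hi.1 hi.2]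

/-- After the first move of the largest disk, relabelling its source and target peg turns the rest
of the walk into a walk from `v` itself. -/
theorem exists_walk_const_last_length_lt {v w : Fin (n + 1) → Fin k}
    (p : (hanoiGraph (n + 1) k).Walk v w) {j : Fin k} (hw : w = fun _ => j)
    (hj : v (Fin.last n) ≠ j) :
    ∃ q : (hanoiGraph (n + 1) k).Walk v (fun _ => v (Fin.last n)), q.length < p.length := by
  induction p with
  | nil => exact absurd (congrFun hw (Fin.last n)) hj
  | @cons u w _ h p ih =>
    by_cases hlast : u (Fin.last n) = w (Fin.last n)
    · obtain ⟨r, hr⟩ := ih hw (hlast ▸ hj)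
      exact ⟨.cons h (r.copy rfl (by rw [hlast])), by simpa using hr⟩
    · obtain ⟨r, hr⟩ : ∃ r : (hanoiGraph (n + 1) k).Walk w (fun _ => w (Fin.last n)),
          r.length ≤ p.length := by
        by_cases hwj : w (Fin.last n) = j
        · exact ⟨p.copy rfl (by rw [hw, hwj]), by simp⟩
        · obtain ⟨r, hr⟩ := ih hw hwj
          exact ⟨r, hr.le⟩
      let τ := relabelPegs (n := n + 1) (Equiv.swap (u (Fin.last n)) (w (Fin.last n)))
      have hstart : τ w = u := swap_comp_eq_of_adj h hlast
      have hend : τ (fun _ => w (Fin.last n)) = fun _ => u (Fin.last n) := by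
        funext
        simp [τ, relabelPegs]
      refine ⟨(r.map τ).copy hstart hend, ?_⟩
      rw [Walk.length_copy, Walk.length_map, Walk.length_cons]
      omega

theorem dist_const_last_lt (hk : 3 ≤ k) (v : Fin (n + 1) → Fin k) {j : Fin k}
    (hj : v (Fin.last n) ≠ j) :
    (hanoiGraph (n + 1) k).dist v (fun _ => v (Fin.last n)) <
      (hanoiGraph (n + 1) k).dist v (fun _ => j) := by
  obtain ⟨p, hp⟩ := (reachable_const hk v j).exists_walk_length_eq_dist
  obtain ⟨q, hq⟩ := exists_walk_const_last_length_lt p rfl hj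
  exact (dist_le q).trans_lt (hp ▸ hq)

end hanoiGraph

open hanoiGraph in
/-- If an automorphism `g` of `H_n^k` fixes the perfect state `\overline{i}`, then
`g` maps the substructure `[i]` onto itself. -/
theorem hanoi_aut_preserves_substructure (n k : ℕ) (hk : 3 ≤ k) (hn : 1 ≤ n)
    (g : hanoiGraph n k ≃g hanoiGraph n k) (i : Fin k)
    (hg : g (fun _ => i) = fun _ => i)
    (v : Fin n → Fin k) (hv : v ⟨n - 1, by omega⟩ = i) :
    g v ⟨n - 1, by omega⟩ = i := by
  obtain ⟨n, rfl⟩ : ∃ m, n = m + 1 := ⟨n - 1, by omega⟩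
  have hlast : (⟨n + 1 - 1, by omega⟩ : Fin (n + 1)) = Fin.last n := Fin.ext (by simp)
  rw [hlast] at hv ⊢
  by_contra hq
  obtain ⟨j, hj⟩ := exists_iso_apply_const_eq_const hk g.symm (g v (Fin.last n))
  have hgj : g (fun _ => j) = fun _ => g v (Fin.last n) := by rw [← hj, RelIso.apply_symm_apply]
  have hij : i ≠ j := by
    rintro rfl
    exact hq (congrFun (hg.symm.trans hgj) (Fin.last n)).symm
  have hcycle := calc (hanoiGraph (n + 1) k).dist v (fun _ => i)
      _ < (hanoiGraph (n + 1) k).dist v (fun _ => j) := hv ▸ dist_const_last_lt hk v (hv ▸ hij)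
      _ = (hanoiGraph (n + 1) k).dist (g v) (fun _ => g v (Fin.last n)) := by
        rw [← hgj, g.dist_eq]
      _ < (hanoiGraph (n + 1) k).dist (g v) (g fun _ => i) := by
        rw [hg]
        exact dist_const_last_lt hk (g v) hq
      _ = (hanoiGraph (n + 1) k).dist v (fun _ => i) := g.dist_eq
  exact lt_irrefl _ hcycle
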